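/- Every L-embedded Banach space is weakly sequentially complete. -/

import Mathlib

open NormedSpace Filter Topology

/-- A sequence spans `ℓ¹` asymptotically isometrically. -/
def SpansL1Asymptotically {X : Type*} [NormedAddCommGroup X] [NormedSpace ℝ X]
    (x : ℕ → X) : Prop :=
  ∃ δ : ℕ → ℝ, (∀ n, 0 ≤ δ n ∧ δ n < 1) ∧ Tendsto δ atTop (nhds 0) ∧
    ∀ (N : ℕ) (α : ℕ → ℝ),
      (∑ n ∈ Finset.range N, (1 - δ n) * |α n|) ≤ ‖∑ n ∈ Finset.range N, α n • x n‖ ∧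
      ‖∑ n ∈ Finset.range N, α n • x n‖ ≤ ∑ n ∈ Finset.range N, |α n|

/-- A sequence spans `ℓ¹` almost isometrically. -/
def SpansL1AlmostIsometrically {X : Type*} [NormedAddCommGroup X] [NormedSpace ℝ X]
    (x : ℕ → X) : Prop :=
  ∃ δ : ℕ → ℝ, (∀ n, 0 ≤ δ n ∧ δ n < 1) ∧ Tendsto δ atTop (nhds 0) ∧
    ∀ (m M : ℕ) (α : ℕ → ℝ),
      (1 - δ m) * (∑ n ∈ Finset.Icc m M, |α n|) ≤ ‖∑ n ∈ Finset.Icc m M, α n • x n‖ ∧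
      ‖∑ n ∈ Finset.Icc m M, α n • x n‖ ≤ ∑ n ∈ Finset.Icc m M, |α n|

/-- A sequence spans `c₀` asymptotically isometrically. -/
def SpansC0Asymptotically {X : Type*} [NormedAddCommGroup X] [NormedSpace ℝ X]
    (z : ℕ → X) : Prop :=
  ∃ δ : ℕ → ℝ, (∀ n, 0 ≤ δ n ∧ δ n < 1) ∧ Tendsto δ atTop (nhds 0) ∧
    ∀ (N : ℕ) (hN : N ≠ 0) (α : ℕ → ℝ),
      ((Finset.range N).sup' (Finset.nonempty_range_iff.mpr hN)
          (fun n => (1 - δ n) * |α n|)) ≤ ‖∑ n ∈ Finset.range N, α n • z n‖ ∧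
      ‖∑ n ∈ Finset.range N, α n • z n‖ ≤
        (Finset.range N).sup' (Finset.nonempty_range_iff.mpr hN)
          (fun n => (1 + δ n) * |α n|)

/-- `P` is an L-projection: an idempotent bounded operator with
`‖ξ‖ = ‖Pξ‖ + ‖ξ - Pξ‖` for all `ξ`. -/
def IsLProjection {E : Type*} [NormedAddCommGroup E] [NormedSpace ℝ E]
    (P : E →L[ℝ] E) : Prop :=
  (∀ ξ, P (P ξ) = P ξ) ∧ ∀ ξ, ‖ξ‖ = ‖P ξ‖ + ‖ξ - P ξ‖

/-- `X` is L-embedded: the canonical image of `X` in its bidual is the range of an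
L-projection. -/
def IsLEmbedded (X : Type*) [NormedAddCommGroup X] [NormedSpace ℝ X] : Prop :=
  ∃ P : StrongDual ℝ (StrongDual ℝ X) →L[ℝ] StrongDual ℝ (StrongDual ℝ X),
    (∀ ξ, P (P ξ) = P ξ) ∧ (∀ ξ, ‖ξ‖ = ‖P ξ‖ + ‖ξ - P ξ‖) ∧
      Set.range P = Set.range (inclusionInDoubleDual ℝ X)

noncomputable instance instNormedAddCommGroupBidual (X : Type*) [NormedAddCommGroup X]
    [NormedSpace ℝ X] : NormedAddCommGroup (StrongDual ℝ (StrongDual ℝ X)) := inferInstance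

noncomputable instance instNormedSpaceBidual (X : Type*) [NormedAddCommGroup X]
    [NormedSpace ℝ X] : NormedSpace ℝ (StrongDual ℝ (StrongDual ℝ X)) := inferInstance

/-- `X` is M-embedded: the annihilator of `X` in `X'''` is the range of an
L-projection on `X'''`. -/
def IsMEmbedded (X : Type*) [NormedAddCommGroup X] [NormedSpace ℝ X] : Prop :=
  ∃ P : StrongDual ℝ (StrongDual ℝ (StrongDual ℝ X)) →L[ℝ] StrongDual ℝ (StrongDual ℝ (StrongDual ℝ X)),
    (∀ φ, P (P φ) = P φ) ∧ (∀ φ, ‖φ‖ = ‖P φ‖ + ‖φ - P φ‖) ∧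
      Set.range P = {φ | ∀ x : X, φ (inclusionInDoubleDual ℝ X x) = 0}

/-- `X` fails the fixed point property: there are a nonempty closed bounded convex set and
a contractive self-map without fixed point. -/
def FailsFPP (X : Type*) [NormedAddCommGroup X] [NormedSpace ℝ X] : Prop :=
  ∃ C : Set X, C.Nonempty ∧ IsClosed C ∧ Bornology.IsBounded C ∧ Convex ℝ C ∧
    ∃ f : X → X, Set.MapsTo f C C ∧
      (∀ x ∈ C, ∀ y ∈ C, x ≠ y → ‖f x - f y‖ < ‖x - y‖) ∧
      ∀ x ∈ C, f x ≠ x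

/-
Let `ξ ∈ X''` be the weak* limit of the weakly Cauchy sequence `x`, and `Pξ = y ∈ X`. If
`ζ := ξ - Pξ` were nonzero, then `w n := x n - y → ζ` weak*, and `ζ` is L-orthogonal to `X`:
`‖z + t ζ‖ = ‖z‖ + |t| ‖ζ‖`. Weak* lower semicontinuity of the norm, made uniform on compact sets
by equicontinuity, then yields indices `n j, m j ≥ j` such that `d j := w (n j) - w (m j)`
satisfies `‖∑ μ j • d j‖ ≥ 2 ‖ζ‖ ∑ μ j - ‖ζ‖` for all `μ ∈ [0,1]^ℕ`. So every convex combination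
of the weakly null sequence `d` has norm at least `‖ζ‖`, contradicting Mazur's theorem.
-/

open NormedSpace Filter Topology Finset
open scoped NNReal

theorem norm_add_eq_of_map_eq_self_of_map_eq_zero {E : Type*} [NormedAddCommGroup E]
    [NormedSpace ℝ E] {P : E →L[ℝ] E} (hP : ∀ ξ, ‖ξ‖ = ‖P ξ‖ + ‖ξ - P ξ‖) {u v : E}
    (hu : P u = u) (hv : P v = 0) : ‖u + v‖ = ‖u‖ + ‖v‖ := by
  simpa [hu, hv] using hP (u + v)

theorem IsCompact.eventually_forall_lt_of_equicontinuous {T ι : Type*} [TopologicalSpace T]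
    {K : Set T} (hK : IsCompact K) {l : Filter ι} {F : ι → T → ℝ} {G : T → ℝ}
    (hF : Equicontinuous F) (hG : Continuous G) (h : ∀ p ∈ K, ∀ ε > 0, ∀ᶠ i in l, G p - ε < F i p)
    {ε : ℝ} (hε : 0 < ε) : ∀ᶠ i in l, ∀ p ∈ K, G p - ε < F i p := by
  have hlocal : ∀ p ∈ K, {q : ι × T | G q.2 - ε < F q.1 q.2} ∈ l ×ˢ 𝓝 p := fun p hp => by
    have hGp : ∀ᶠ q in 𝓝 p, G q < G p + ε / 3 :=
      (hG.tendsto p).eventually (gt_mem_nhds (by linarith))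
    have hFp := Metric.equicontinuousAt_iff_right.1 (hF p) (ε / 3) (by positivity)
    filter_upwards [prod_mem_prod (h p hp (ε / 3) (by positivity)) (hGp.and hFp)]
      with ⟨i, q⟩ ⟨hi, hGq, hFq⟩
    have := (Real.dist_eq _ _ ▸ hFq i).le
    simp only [Set.mem_ofPred_eq] at hi hGq this ⊢
    linarith [le_abs_self (F i p - F i q)]
  have hK' : ∀ᶠ q in l ×ˢ 𝓝ˢ K, G q.2 - ε < F q.1 q.2 := hK.mem_prod_nhdsSet_of_forall hlocal
  exact hK'.curry.mono fun _ h => h.self_of_nhdsSet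

section WeakStar

variable {X : Type*} [NormedAddCommGroup X] [NormedSpace ℝ X]

theorem exists_nnnorm_le_of_forall_tendsto {x : ℕ → X} {l : StrongDual ℝ X → ℝ}
    (hl : ∀ f, Tendsto (fun n => f (x n)) atTop (𝓝 (l f))) : ∃ C : ℝ≥0, ∀ n, ‖x n‖₊ ≤ C := by
  obtain ⟨C, hC⟩ := banach_steinhaus (g := fun n => inclusionInDoubleDual ℝ X (x n)) fun f => by
    obtain ⟨C, hC⟩ := (hl f).norm.bddAbove_range
    exact ⟨C, fun n => hC ⟨n, rfl⟩⟩
  refine ⟨C.toNNReal, fun n => ?_⟩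
  rw [← NNReal.coe_le_coe, coe_nnnorm, ← (inclusionInDoubleDualLi ℝ).norm_map (x n)]
  exact (hC n).trans (Real.le_coe_toNNReal C)

theorem exists_bidual_apply_eq_of_forall_tendsto {x : ℕ → X} {l : StrongDual ℝ X → ℝ}
    (hl : ∀ f, Tendsto (fun n => f (x n)) atTop (𝓝 (l f))) :
    ∃ ξ : StrongDual ℝ (StrongDual ℝ X), ∀ f, ξ f = l f :=
  ⟨continuousLinearMapOfTendsto (fun n => inclusionInDoubleDual ℝ X (x n))
    (tendsto_pi_nhds.2 hl), fun _ => rfl⟩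

theorem eventually_lt_norm_of_forall_tendsto {ι : Type*} {l : Filter ι} {v : ι → X}
    {Φ : StrongDual ℝ (StrongDual ℝ X)} (hv : ∀ f, Tendsto (fun i => f (v i)) l (𝓝 (Φ f)))
    {ε : ℝ} (hε : 0 < ε) : ∀ᶠ i in l, ‖Φ‖ - ε < ‖v i‖ := by
  obtain ⟨f, hf1, hf⟩ := Φ.exists_lt_apply_of_lt_opNorm (sub_lt_self _ hε)
  filter_upwards [(hv f).norm.eventually (lt_mem_nhds hf)] with i hi
  calc ‖Φ‖ - ε < ‖f (v i)‖ := hi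
    _ ≤ ‖f‖ * ‖v i‖ := f.le_opNorm _
    _ ≤ ‖v i‖ := mul_le_of_le_one_left (norm_nonneg _) hf1.le

theorem lipschitzWith_norm_add_smul (v : X) :
    LipschitzWith (1 + ‖v‖₊) fun p : X × ℝ => ‖p.1 + p.2 • v‖ :=
  LipschitzWith.of_dist_le_mul fun p q => by
    have h1 : ‖p.1 - q.1‖ ≤ dist p q := dist_eq_norm p q ▸ norm_fst_le (p - q)
    have h2 : ‖p.2 - q.2‖ ≤ dist p q := dist_eq_norm p q ▸ norm_snd_le (p - q)
    calc dist ‖p.1 + p.2 • v‖ ‖q.1 + q.2 • v‖ ≤ ‖(p.1 - q.1) + (p.2 - q.2) • v‖ := by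
          rw [sub_smul, ← add_sub_add_comm]; exact dist_norm_norm_le _ _
      _ ≤ ‖p.1 - q.1‖ + ‖p.2 - q.2‖ * ‖v‖ := by grw [norm_add_le, norm_smul]
      _ ≤ (1 + ‖v‖) * dist p q := by nlinarith [norm_nonneg v]

theorem eventually_forall_lt_norm_add_smul {w : ℕ → X} {ζ : StrongDual ℝ (StrongDual ℝ X)}
    (hζ : ∀ f, Tendsto (fun n => f (w n)) atTop (𝓝 (ζ f))) {K : Set (X × ℝ)} (hK : IsCompact K)
    {ε : ℝ} (hε : 0 < ε) :
    ∀ᶠ n in atTop, ∀ p ∈ K,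
      ‖inclusionInDoubleDual ℝ X p.1 + p.2 • ζ‖ - ε < ‖p.1 + p.2 • w n‖ := by
  obtain ⟨C, hC⟩ := exists_nnnorm_le_of_forall_tendsto hζ
  have hequi : Equicontinuous fun n (p : X × ℝ) => ‖p.1 + p.2 • w n‖ :=
    (LipschitzWith.uniformEquicontinuous _ (1 + C) fun n =>
      (lipschitzWith_norm_add_smul (w n)).weaken (by gcongr; exact hC n)).equicontinuous
  refine hK.eventually_forall_lt_of_equicontinuous hequi (by fun_prop) (fun p _ δ hδ => ?_) hε
  refine eventually_lt_norm_of_forall_tendsto (fun f => ?_) hδ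
  simpa using ((hζ f).const_mul p.2).const_add (f p.1)

theorem exists_forall_le_norm_add_smul_sub {w : ℕ → X} {a : ℝ}
    (hw : ∀ K : Set (X × ℝ), IsCompact K → ∀ ε > 0,
      ∀ᶠ n in atTop, ∀ p ∈ K, ‖p.1‖ + |p.2| * a - ε < ‖p.1 + p.2 • w n‖)
    {K : Set X} (hK : IsCompact K) {ε : ℝ} (hε : 0 < ε) (N : ℕ) :
    ∃ n ≥ N, ∃ m ≥ N, ∀ z ∈ K, ∀ t ∈ Set.Icc (0 : ℝ) 1,
      ‖z‖ + t * (2 * a) - ε ≤ ‖z + t • (w n - w m)‖ := by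
  have hK₁ : IsCompact (K ×ˢ Set.Icc (0 : ℝ) 1) := hK.prod isCompact_Icc
  obtain ⟨n, hnN, hn⟩ := ((eventually_ge_atTop N).and (hw _ hK₁ (ε / 2) (half_pos hε))).exists
  -- `m` is chosen after `n`, uniformly over the compact set of all `z + t • w n`.
  have hK₂ := hK₁.image (f := fun p : X × ℝ => (p.1 + p.2 • w n, -p.2)) (by fun_prop)
  obtain ⟨m, hmN, hm⟩ := ((eventually_ge_atTop N).and (hw _ hK₂ (ε / 2) (half_pos hε))).exists
  refine ⟨n, hnN, m, hmN, fun z hz t ht => ?_⟩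
  have h₁ := hn (z, t) ⟨hz, ht⟩
  have h₂ := hm _ (Set.mem_image_of_mem _ (show (z, t) ∈ K ×ˢ Set.Icc 0 1 from ⟨hz, ht⟩))
  simp only [abs_neg, abs_of_nonneg ht.1] at h₁ h₂
  rw [show z + t • (w n - w m) = z + t • w n + -t • w m by module]
  linarith

theorem exists_seq_forall_le_norm_sum_smul {D : ℕ → Set X} {c : ℝ} {ε : ℕ → ℝ}
    (h : ∀ K : Set X, IsCompact K → ∀ j, ∃ v ∈ D j, ∀ z ∈ K, ∀ t ∈ Set.Icc (0 : ℝ) 1,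
      ‖z‖ + t * c - ε j ≤ ‖z + t • v‖) :
    ∃ d : ℕ → X, (∀ j, d j ∈ D j) ∧ ∀ j (μ : ℕ → ℝ), (∀ i, μ i ∈ Set.Icc (0 : ℝ) 1) →
      c * ∑ i ∈ range j, μ i - ∑ i ∈ range j, ε i ≤ ‖∑ i ∈ range j, μ i • d i‖ := by
  choose v hvD hv using h
  -- `K j` is a compact set containing all sums `∑ i < j, μ i • d i` with `μ ∈ [0,1]^j`.
  let K : ℕ → {K : Set X // IsCompact K} := fun j => Nat.rec ⟨{0}, isCompact_singleton⟩
    (fun j K => ⟨(fun p : X × ℝ => p.1 + p.2 • v K.1 K.2 j) '' (K.1 ×ˢ Set.Icc 0 1),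
      (K.2.prod isCompact_Icc).image (by fun_prop)⟩) j
  refine ⟨fun j => v (K j).1 (K j).2 j, fun j => hvD _ _ j, fun j μ hμ => ?_⟩
  suffices ∑ i ∈ range j, μ i • v (K i).1 (K i).2 i ∈ (K j).1 ∧
      c * ∑ i ∈ range j, μ i - ∑ i ∈ range j, ε i ≤
        ‖∑ i ∈ range j, μ i • v (K i).1 (K i).2 i‖ from this.2
  induction j with
  | zero => simp [K]
  | succ j ih =>
    simp only [sum_range_succ]
    refine ⟨⟨(_, μ j), ⟨ih.1, hμ j⟩, rfl⟩, ?_⟩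
    have := hv (K j).1 (K j).2 j _ ih.1 (μ j) (hμ j)
    linarith [ih.2]

theorem zero_mem_closure_convexHull_range_of_forall_tendsto_zero {d : ℕ → X}
    (hd : ∀ f : StrongDual ℝ X, Tendsto (fun n => f (d n)) atTop (𝓝 0)) :
    (0 : X) ∈ closure (convexHull ℝ (Set.range d)) := by
  by_contra h
  obtain ⟨f, u, hf0, hfu⟩ :=
    geometric_hahn_banach_point_closed (convex_convexHull ℝ _).closure isClosed_closure h
  rw [map_zero] at hf0
  have := ge_of_tendsto (hd f) (Eventually.of_forall fun n =>
    (hfu _ (subset_closure (subset_convexHull ℝ _ (Set.mem_range_self n)))).le)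
  linarith

theorem le_norm_of_mem_convexHull_range {d : ℕ → X} {r : ℝ}
    (h : ∀ j (μ : ℕ → ℝ), (∀ i, μ i ∈ Set.Icc (0 : ℝ) 1) → ∑ i ∈ range j, μ i = 1 →
      r ≤ ‖∑ i ∈ range j, μ i • d i‖) {u : X} (hu : u ∈ convexHull ℝ (Set.range d)) : r ≤ ‖u‖ := by
  classical
  rw [convexHull_range_eq_exists_affineCombination] at hu
  obtain ⟨s, μ, hμ0, hμ1, rfl⟩ := hu
  obtain ⟨j, hj⟩ := s.exists_nat_subset_range
  rw [s.affineCombination_eq_linear_combination d μ hμ1]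
  convert h j (fun i => if i ∈ s then μ i else 0) (fun i => ?_) ?_ using 2
  · simp_rw [ite_smul, zero_smul, sum_ite_mem, Finset.inter_eq_right.2 hj]
  · split_ifs with hi
    exacts [⟨hμ0 i hi, hμ1 ▸ single_le_sum hμ0 hi⟩, ⟨le_rfl, zero_le_one⟩]
  · rw [sum_ite_mem, Finset.inter_eq_right.2 hj, hμ1]

theorem eq_zero_of_forall_tendsto_of_norm_add_smul_eq {w : ℕ → X}
    {ζ : StrongDual ℝ (StrongDual ℝ X)} (hζ : ∀ f, Tendsto (fun n => f (w n)) atTop (𝓝 (ζ f)))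
    (hL : ∀ (z : X) (t : ℝ), ‖inclusionInDoubleDual ℝ X z + t • ζ‖ = ‖z‖ + |t| * ‖ζ‖) :
    ζ = 0 := by
  by_contra hζ0
  have ha : 0 < ‖ζ‖ := norm_pos_iff.2 hζ0
  set ε : ℕ → ℝ := fun j => ‖ζ‖ / 2 * (1 / 2) ^ j
  have hε : ∀ j, ∑ i ∈ range j, ε i ≤ ‖ζ‖ := fun j => by
    rw [← mul_sum]; nlinarith [sum_geometric_two_le j]
  obtain ⟨d, hdD, hd⟩ := exists_seq_forall_le_norm_sum_smul
    (D := fun j => {v | ∃ n ≥ j, ∃ m ≥ j, v = w n - w m}) (c := 2 * ‖ζ‖) (ε := ε)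
    fun K hK j => by
      obtain ⟨n, hn, m, hm, h⟩ := exists_forall_le_norm_add_smul_sub (fun K hK ε hε => by
        simpa only [hL] using eventually_forall_lt_norm_add_smul hζ hK hε) hK
        (by positivity : 0 < ε j) j
      exact ⟨_, ⟨n, hn, m, hm, rfl⟩, h⟩
  choose n hn m hm hdnm using hdD
  have hnull : ∀ f : StrongDual ℝ X, Tendsto (fun j => f (d j)) atTop (𝓝 0) := fun f => by
    have := ((hζ f).comp (tendsto_atTop_mono hn tendsto_id)).sub
      ((hζ f).comp (tendsto_atTop_mono hm tendsto_id))
    simpa [hdnm] using this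
  have hbound : closure (convexHull ℝ (Set.range d)) ⊆ {u | ‖ζ‖ ≤ ‖u‖} :=
    closure_minimal (fun u hu => le_norm_of_mem_convexHull_range (fun j μ hμ hμ1 => by
      linarith [hμ1 ▸ hd j μ hμ, hε j]) hu) (isClosed_le continuous_const continuous_norm)
  have := hbound (zero_mem_closure_convexHull_range_of_forall_tendsto_zero hnull)
  simp only [Set.mem_ofPred_eq, norm_zero] at this
  linarith

end WeakStar

theorem stmt10_general {X : Type*} [NormedAddCommGroup X] [NormedSpace ℝ X] (hX : IsLEmbedded X)
    (x : ℕ → X)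
    (hweakCauchy : ∀ f : StrongDual ℝ X, ∃ l : ℝ, Tendsto (fun n => f (x n)) atTop (nhds l)) :
    ∃ y : X, ∀ f : StrongDual ℝ X, Tendsto (fun n => f (x n)) atTop (nhds (f y)) := by
  obtain ⟨P, hPP, hPnorm, hPrange⟩ := hX
  choose l hl using hweakCauchy
  obtain ⟨ξ, hξ⟩ := exists_bidual_apply_eq_of_forall_tendsto hl
  obtain ⟨y, hy⟩ : P ξ ∈ Set.range (inclusionInDoubleDual ℝ X) := hPrange ▸ Set.mem_range_self ξ
  have hPJ : ∀ z, P (inclusionInDoubleDual ℝ X z) = inclusionInDoubleDual ℝ X z := fun z => by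
    obtain ⟨η, hη⟩ : inclusionInDoubleDual ℝ X z ∈ Set.range P := hPrange ▸ Set.mem_range_self z
    rw [← hη, hPP]
  have hPζ : P (ξ - P ξ) = 0 := by rw [map_sub, hPP, sub_self]
  have hζ : ξ - P ξ = 0 := eq_zero_of_forall_tendsto_of_norm_add_smul_eq (w := fun n => x n - y)
    (fun f => by simpa [hξ, ← hy] using (hl f).sub_const (f y))
    (fun z t => by
      rw [norm_add_eq_of_map_eq_self_of_map_eq_zero hPnorm (hPJ z)
        (by rw [map_smul, hPζ, smul_zero]), norm_smul, Real.norm_eq_abs]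
      exact congrArg (· + _) ((inclusionInDoubleDualLi ℝ).norm_map z))
  have hξy : ξ = inclusionInDoubleDual ℝ X y := (sub_eq_zero.1 hζ).trans hy.symm
  refine ⟨y, fun f => ?_⟩
  simpa [← hξ, hξy] using hl f

theorem stmt10 {X : Type*} [NormedAddCommGroup X] [NormedSpace ℝ X] [CompleteSpace X] (hX : IsLEmbedded X)
    (x : ℕ → X)
    (hweakCauchy : ∀ f : StrongDual ℝ X, ∃ l : ℝ, Tendsto (fun n => f (x n)) atTop (nhds l)) :
    ∃ y : X, ∀ f : StrongDual ℝ X, Tendsto (fun n => f (x n)) atTop (nhds (f y)) :=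
  stmt10_general hX x hweakCauchy
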